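/- arXiv:1604.01092 — 2 statements merged into one kernel-verified Lean document; each statement's English description precedes it below -/
import Mathlib

section
/- Let φ be a C² function on an open subset U of ℝⁿ with Δφ = 0, let c ∈ ℝⁿ be a constant vector with vanishing last component, let e be the unit vector in the last coordinate direction, and let g > 0. Then the vector field A = (-(|c|²/g)(e·∇φ) + c·x + φ)∇φ + (|c|²/g)(½|∇φ|² - c·∇φ)e + ((|c|²/g)(e·∇φ) - φ)c satisfies ∇·A = |∇φ|² on U. -/
/-!
Write `A = f ∇φ + h e + k c` with scalar coefficients `f, h, k`. The product rule gives
`∇·A = f Δφ + ∂_{∇φ} f + ∂_e h + ∂_c k`, and `Δφ = 0`. With `K = ‖c‖²/g` and `H = D∇φ`,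
`∂_{∇φ} f = -K ⟪e, H ∇φ⟫ + ⟪c, ∇φ⟫ + ‖∇φ‖²`, `∂_e h = K (⟪∇φ, H e⟫ - ⟪c, H e⟫)` and
`∂_c k = K ⟪e, H c⟫ - ⟪∇φ, c⟫`. The `⟪c, ∇φ⟫` terms cancel, and the Hessian terms cancel in
pairs because the Hessian `H` of the `C²` function `φ` is symmetric.
-/

open MeasureTheory Real Filter

noncomputable section

abbrev Euc (n : ℕ) := EuclideanSpace ℝ (Fin n)

def lapl {n : ℕ} (f : Euc n → ℝ) (x : Euc n) : ℝ :=
  ∑ i, fderiv ℝ (fun y => fderiv ℝ f y (EuclideanSpace.single i 1)) x (EuclideanSpace.single i 1)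

def diverg {n : ℕ} (A : Euc n → Euc n) (x : Euc n) : ℝ :=
  ∑ i, fderiv ℝ A x (EuclideanSpace.single i 1) i

def kelvinInv {n : ℕ} (x : Euc n) : Euc n := (‖x‖ ^ 2)⁻¹ • x

def lastIdx (n : ℕ) (hn : 0 < n) : Fin n := ⟨n - 1, Nat.sub_lt hn Nat.one_pos⟩

def eLast (n : ℕ) (hn : 0 < n) : Euc n := EuclideanSpace.single (lastIdx n hn) 1

def horiz {n : ℕ} (x : Euc n) : Euc (n - 1) :=
  WithLp.toLp 2 fun (i : Fin (n - 1)) => x ⟨i.val, lt_of_lt_of_le i.isLt (Nat.sub_le n 1)⟩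

def vert {n : ℕ} (hn : 0 < n) (x : Euc n) : ℝ := x (lastIdx n hn)

def mkPt {n : ℕ} (x' : Euc (n - 1)) (t : ℝ) : Euc n :=
  WithLp.toLp 2 fun (j : Fin n) => if h : (j : ℕ) < n - 1 then x' ⟨j, h⟩ else t

open InnerProductSpace

theorem ContDiffAt.differentiableAt_fderiv {𝕜 E F : Type*} [NontriviallyNormedField 𝕜]
    [NormedAddCommGroup E] [NormedSpace 𝕜 E] [NormedAddCommGroup F] [NormedSpace 𝕜 F]
    {f : E → F} {x : E} (h : ContDiffAt 𝕜 2 f x) : DifferentiableAt 𝕜 (fderiv 𝕜 f) x :=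
  (h.fderiv_right (m := 1) le_rfl).differentiableAt one_ne_zero

section Gradient

variable {E : Type*} [NormedAddCommGroup E] [InnerProductSpace ℝ E] [CompleteSpace E]
  {φ : E → ℝ} {x : E}

-- Over `ℝ` the Riesz isomorphism `(toDual ℝ E).symm`, conjugate-linear in general, is linear.
theorem HasFDerivAt.hasFDerivAt_gradient {D : E →L[ℝ] StrongDual ℝ E}
    (h : HasFDerivAt (fderiv ℝ φ) D x) :
    HasFDerivAt (gradient φ)
      (((toDual ℝ E).symm : StrongDual ℝ E ≃ₗᵢ[ℝ] E).toContinuousLinearEquiv.toContinuousLinearMap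
        ∘L D) x :=
  ((toDual ℝ E).symm : StrongDual ℝ E ≃ₗᵢ[ℝ] E).toContinuousLinearEquiv.hasFDerivAt.comp x h

theorem DifferentiableAt.differentiableAt_gradient (h : DifferentiableAt ℝ (fderiv ℝ φ) x) :
    DifferentiableAt ℝ (gradient φ) x :=
  h.hasFDerivAt.hasFDerivAt_gradient.differentiableAt

theorem inner_fderiv_gradient_apply (h : DifferentiableAt ℝ (fderiv ℝ φ) x) (u v : E) :
    ⟪fderiv ℝ (gradient φ) x u, v⟫_ℝ = fderiv ℝ (fderiv ℝ φ) x u v := by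
  rw [h.hasFDerivAt.hasFDerivAt_gradient.fderiv]
  exact toDual_symm_apply

theorem ContDiffAt.isSymmetric_fderiv_gradient (h : ContDiffAt ℝ 2 φ x) :
    (fderiv ℝ (gradient φ) x : E →ₗ[ℝ] E).IsSymmetric := by
  intro u v
  rw [ContinuousLinearMap.coe_coe, inner_fderiv_gradient_apply h.differentiableAt_fderiv,
    real_inner_comm, inner_fderiv_gradient_apply h.differentiableAt_fderiv]
  exact h.isSymmSndFDerivAt (by simp) u v

end Gradient

section Divergence

variable {n : ℕ} {x : Euc n}

theorem diverg_eq_trace (A : Euc n → Euc n) (x : Euc n) :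
    diverg A x = LinearMap.trace ℝ (Euc n) (fderiv ℝ A x) := by
  rw [LinearMap.trace_eq_sum_inner _ (EuclideanSpace.basisFun (Fin n) ℝ), diverg]
  simp [EuclideanSpace.inner_single_left]

theorem diverg_add {A B : Euc n → Euc n} (hA : DifferentiableAt ℝ A x)
    (hB : DifferentiableAt ℝ B x) :
    diverg (fun y => A y + B y) x = diverg A x + diverg B x := by
  simp only [diverg_eq_trace, fderiv_fun_add hA hB, ContinuousLinearMap.toLinearMap_add, map_add]

theorem diverg_smul {f : Euc n → ℝ} {V : Euc n → Euc n} (hf : DifferentiableAt ℝ f x)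
    (hV : DifferentiableAt ℝ V x) :
    diverg (fun y => f y • V y) x = f x * diverg V x + fderiv ℝ f x (V x) := by
  simp only [diverg_eq_trace, fderiv_fun_smul hf hV, ContinuousLinearMap.toLinearMap_add,
    ContinuousLinearMap.toLinearMap_smul, map_add, map_smul, smul_eq_mul]
  rw [ContinuousLinearMap.coe_smulRight, LinearMap.trace_smulRight]
  rfl

theorem diverg_smul_const {f : Euc n → ℝ} (hf : DifferentiableAt ℝ f x) (v : Euc n) :
    diverg (fun y => f y • v) x = fderiv ℝ f x v := by
  simpa [diverg_eq_trace] using diverg_smul hf (differentiableAt_const v)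

theorem diverg_gradient {φ : Euc n → ℝ} (h : DifferentiableAt ℝ (fderiv ℝ φ) x) :
    diverg (gradient φ) x = lapl φ x := by
  refine Finset.sum_congr rfl fun i _ => ?_
  simp [fderiv_clm_apply h (differentiableAt_const _), ← inner_fderiv_gradient_apply h,
    EuclideanSpace.inner_single_right]

theorem diverg_smul_gradient_add_smul_add_smul {φ f h k : Euc n → ℝ}
    {f' h' k' : Euc n →L[ℝ] ℝ} (hD : DifferentiableAt ℝ (fderiv ℝ φ) x)
    (hf : HasFDerivAt f f' x) (hh : HasFDerivAt h h' x) (hk : HasFDerivAt k k' x)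
    (v w : Euc n) :
    diverg (fun y => f y • gradient φ y + h y • v + k y • w) x
      = f x * lapl φ x + f' (gradient φ x) + h' v + k' w := by
  have hG := hD.differentiableAt_gradient
  rw [diverg_add ((hf.differentiableAt.fun_smul hG).fun_add (hh.differentiableAt.smul_const v))
      (hk.differentiableAt.smul_const w),
    diverg_add (hf.differentiableAt.fun_smul hG) (hh.differentiableAt.smul_const v),
    diverg_smul hf.differentiableAt hG, diverg_smul_const hh.differentiableAt,
    diverg_smul_const hk.differentiableAt, diverg_gradient hD, hf.fderiv, hh.fderiv, hk.fderiv]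

end Divergence

theorem div_A_eq_grad_sq_general {n : ℕ} (hn : 0 < n) (U : Set (Euc n)) (hU : IsOpen U)
    (φ : Euc n → ℝ) (hφ : ContDiffOn ℝ 2 φ U)
    (hharm : ∀ x ∈ U, lapl φ x = 0)
    (c : Euc n)
    (g : ℝ) :
    ∀ x ∈ U,
      diverg (fun y =>
        (-(‖c‖ ^ 2 / g) * (inner ℝ (eLast n hn) (gradient φ y) : ℝ)
            + (inner ℝ c y : ℝ) + φ y) • gradient φ y
        + ((‖c‖ ^ 2 / g) * ((1 / 2) * ‖gradient φ y‖ ^ 2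
            - (inner ℝ c (gradient φ y) : ℝ))) • eLast n hn
        + ((‖c‖ ^ 2 / g) * (inner ℝ (eLast n hn) (gradient φ y) : ℝ) - φ y) • c) x
      = ‖gradient φ x‖ ^ 2 := by
  intro x hx
  have hφx : ContDiffAt ℝ 2 φ x := hφ.contDiffAt (hU.mem_nhds hx)
  have hD := hφx.differentiableAt_fderiv
  have hG := hD.differentiableAt_gradient.hasFDerivAt
  have hH := hφx.isSymmetric_fderiv_gradient
  set H := fderiv ℝ (gradient φ) x
  have hφ' : HasFDerivAt φ (innerSL ℝ (gradient φ x)) x :=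
    hasGradientAt_iff_hasFDerivAt.mp (hφx.differentiableAt (by norm_num)).hasGradientAt
  have hinner (w : Euc n) : HasFDerivAt (fun y => ⟪w, gradient φ y⟫_ℝ) (innerSL ℝ w ∘L H) x :=
    (innerSL ℝ w).hasFDerivAt.comp x hG
  have hlin : HasFDerivAt (fun y => ⟪c, y⟫_ℝ) (innerSL ℝ c) x := (innerSL ℝ c).hasFDerivAt
  have hf := (((hinner (eLast n hn)).const_mul (-(‖c‖ ^ 2 / g))).fun_add hlin).fun_add hφ'
  have hh := ((hG.norm_sq.const_mul (1 / 2)).fun_sub (hinner c)).const_mul (‖c‖ ^ 2 / g)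
  have hk := ((hinner (eLast n hn)).const_mul (‖c‖ ^ 2 / g)).fun_sub hφ'
  rw [diverg_smul_gradient_add_smul_add_smul hD hf hh hk, hharm x hx]
  have hHe (v : Euc n) : ⟪eLast n hn, H v⟫_ℝ = ⟪v, H (eLast n hn)⟫_ℝ := by
    rw [← hH.apply_clm, real_inner_comm]
  simp only [add_apply, sub_apply, smul_apply, ContinuousLinearMap.comp_apply,
    innerSL_apply_apply, smul_eq_mul, nsmul_eq_mul, real_inner_self_eq_norm_sq]
  rw [hHe, hHe, real_inner_comm c]
  ring

/-- Divergence identity `∇·A = |∇φ|²` for the vector field `A` built from a harmonic `φ`. -/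
theorem div_A_eq_grad_sq {n : ℕ} (hn : 0 < n) (U : Set (Euc n)) (hU : IsOpen U)
    (φ : Euc n → ℝ) (hφ : ContDiffOn ℝ 2 φ U)
    (hharm : ∀ x ∈ U, lapl φ x = 0)
    (c : Euc n) (hc : vert hn c = 0)
    (g : ℝ) (hg : 0 < g) :
    ∀ x ∈ U,
      diverg (fun y =>
        (-(‖c‖ ^ 2 / g) * (inner ℝ (eLast n hn) (gradient φ y) : ℝ)
            + (inner ℝ c y : ℝ) + φ y) • gradient φ y
        + ((‖c‖ ^ 2 / g) * ((1 / 2) * ‖gradient φ y‖ ^ 2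
            - (inner ℝ c (gradient φ y) : ℝ))) • eLast n hn
        + ((‖c‖ ^ 2 / g) * (inner ℝ (eLast n hn) (gradient φ y) : ℝ) - φ y) • c) x
      = ‖gradient φ x‖ ^ 2 :=
  div_A_eq_grad_sq_general hn U hU φ hφ hharm c g
end
end

section
/- Let η : ℝ^{n-1} → ℝ satisfy |η(x')| ≤ C|x'|^{-(n-1+ε)}, |Dη(x')| ≤ C|x'|^{-(n+ε)}, |D²η(x')| ≤ C|x'|^{-(n+1+ε)} for |x'| ≥ 1. Then the function h(ξ) := |ξ|² η(ξ/|ξ|²)² defined for 0 < |ξ| < 1 extends to a C² function on a neighborhood of ξ = 0 with h(0) = 0, Dh(0) = 0, D²h(0) = 0. -/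
open MeasureTheory Real Filter

noncomputable section

/-!
Write `h = q · (η ∘ K)²` with `q ξ = ‖ξ‖²` and `K ξ = ξ / ‖ξ‖²`. Both `q` and `K` are homogeneous
(of degrees `2` and `-1`), so scaling from the unit sphere gives `‖Dʲ q ξ‖ ≲ ‖ξ‖^(2-j)` and
`‖Dʲ K ξ‖ ≲ ‖ξ‖^(-1-j)`. Since `‖K ξ‖ = ‖ξ‖⁻¹`, the decay of `η` gives `‖Dʲ η (K ξ)‖ ≲ ‖ξ‖ ^ p` with
`p = n - 1 + ε`, and the Faà di Bruno and Leibniz bounds combine these into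
`‖Dⁱ h ξ‖ ≲ ‖ξ‖ ^ (2p + 2 - 2i)` for `0 < ‖ξ‖ ≤ 1`. Because `p > 1`, this is `o(‖ξ‖ ^ (2 - i))` for
`i ≤ 2`: `h` and `Dh` are flat to first order at the origin and `D²h → 0` there, so setting
`h 0 = 0` gives a `C²` function whose derivatives of order at most two vanish at `0`.
-/

open Topology Asymptotics

theorem inv_sq_pow_eq_zpow {r : ℝ} (j : ℕ) : (r ^ 2)⁻¹ ^ j = r ^ (-(2 * j : ℤ)) := by
  rw [zpow_neg, zpow_mul, inv_pow]
  norm_cast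

section NormRpow

variable {G : Type*}

theorem tendsto_norm_rpow_nhds_zero [SeminormedAddCommGroup G] {a : ℝ} (ha : 0 < a) :
    Tendsto (fun x : G => ‖x‖ ^ a) (𝓝 0) (𝓝 0) := by
  simpa [Real.zero_rpow ha.ne'] using
    (continuous_norm.rpow_const fun _ => Or.inr ha.le).tendsto (0 : G)

theorem isLittleO_norm_rpow_id [SeminormedAddCommGroup G] {a : ℝ} (ha : 1 < a) :
    (fun x : G => ‖x‖ ^ a) =o[𝓝 0] fun x => x := by
  have := ((isLittleO_one_iff ℝ).2 (tendsto_norm_rpow_nhds_zero (G := G) (sub_pos.2 ha))).mul_isBigO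
    (isBigO_refl (fun x : G => ‖x‖) (𝓝 0))
  simp only [one_mul] at this
  refine isLittleO_norm_right.1 (this.congr_left fun x => ?_)
  rw [← Real.rpow_add_one' (norm_nonneg x) (by linarith), sub_add_cancel]

theorem isBigO_norm_rpow_nhdsNE_of_le [NormedAddCommGroup G] {a b : ℝ} (hab : b ≤ a) :
    (fun x : G => ‖x‖ ^ a) =O[𝓝[≠] 0] fun x => ‖x‖ ^ b := by
  refine IsBigO.of_bound 1 ?_
  filter_upwards [nhdsWithin_le_nhds (Metric.closedBall_mem_nhds (0 : G) one_pos),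
    self_mem_nhdsWithin] with x hx1 hx
  have hr : 0 < ‖x‖ := norm_pos_iff.2 hx
  rw [mem_closedBall_zero_iff] at hx1
  simp only [Real.norm_of_nonneg (Real.rpow_nonneg hr.le _), one_mul]
  exact Real.rpow_le_rpow_of_exponent_ge hr hx1 hab

end NormRpow

section IteratedFDerivBounds

variable {E F : Type*} [NormedAddCommGroup E] [NormedSpace ℝ E] [NormedAddCommGroup F]
  [NormedSpace ℝ F]

theorem iteratedFDeriv_eq_smul_of_homogeneous {f : E → F} {d : ℤ} {i : ℕ}
    (hf : ContDiffOn ℝ i f {0}ᶜ) (hom : ∀ c : ℝ, 0 < c → ∀ x, f (c • x) = c ^ d • f x)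
    {c : ℝ} (hc : 0 < c) {x : E} (hx : x ≠ 0) :
    iteratedFDeriv ℝ i f (c • x) = c ^ (d - i) • iteratedFDeriv ℝ i f x := by
  let e : E ≃L[ℝ] E := ContinuousLinearEquiv.smulLeft (Units.mk0 c hc.ne')
  have he : ⇑e = (c • ·) := rfl
  have hfe : f ∘ e = fun y => c ^ d • f y := funext fun y => hom c hc y
  have key := e.iteratedFDerivWithin_comp_right f uniqueDiffOn_univ (x := x) (Set.mem_univ _) i
  simp only [Set.preimage_univ, iteratedFDerivWithin_univ, hfe] at key
  rw [iteratedFDeriv_const_smul_apply' (hf.contDiffAt (isOpen_compl_singleton.mem_nhds hx))] at key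
  have hscale : (iteratedFDeriv ℝ i f (c • x)).compContinuousLinearMap (fun _ => (e : E →L[ℝ] E))
      = c ^ i • iteratedFDeriv ℝ i f (c • x) := by
    ext v
    simp [he, ContinuousMultilinearMap.map_smul_univ, Finset.prod_const]
  rw [he, hscale] at key
  rw [zpow_sub₀ hc.ne', zpow_natCast, div_eq_inv_mul, mul_smul, key,
    inv_smul_smul₀ (pow_ne_zero _ hc.ne')]

theorem exists_norm_iteratedFDeriv_le_of_homogeneous [ProperSpace E] {f : E → F} {d : ℤ} {i : ℕ}
    (hf : ContDiffOn ℝ i f {0}ᶜ) (hom : ∀ c : ℝ, 0 < c → ∀ x, f (c • x) = c ^ d • f x) :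
    ∃ Q, ∀ x ≠ 0, ‖iteratedFDeriv ℝ i f x‖ ≤ Q * ‖x‖ ^ (d - i) := by
  have hsphere : Metric.sphere (0 : E) 1 ⊆ {0}ᶜ := fun u hu h0 => by simp_all
  obtain ⟨Q, hQ⟩ := (isCompact_sphere (0 : E) 1).exists_bound_of_continuousOn
    (f := iteratedFDeriv ℝ i f) fun u hu =>
      ((hf.contDiffAt (isOpen_compl_singleton.mem_nhds (hsphere hu))).continuousAt_iteratedFDeriv
        le_rfl).continuousWithinAt
  refine ⟨Q, fun x hx => ?_⟩
  have hr : 0 < ‖x‖ := norm_pos_iff.2 hx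
  have hu : ‖‖x‖⁻¹ • x‖ = 1 := by simp [norm_smul, hr.ne']
  have hxu : ‖x‖ • ‖x‖⁻¹ • x = x := smul_inv_smul₀ hr.ne' x
  rw [← hxu, iteratedFDeriv_eq_smul_of_homogeneous hf hom hr (by simpa [← norm_pos_iff, hu]),
    norm_smul, Real.norm_of_nonneg (zpow_nonneg hr.le _), hxu, mul_comm]
  exact mul_le_mul_of_nonneg_right (hQ _ (by simpa using hu)) (zpow_nonneg hr.le _)

theorem exists_forall_norm_iteratedFDeriv_le_of_homogeneous [ProperSpace E] {f : E → F} {d : ℤ}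
    {N : ℕ} (hf : ContDiffOn ℝ N f {0}ᶜ) (hom : ∀ c : ℝ, 0 < c → ∀ x, f (c • x) = c ^ d • f x) :
    ∃ Q, ∀ i ≤ N, ∀ x ≠ 0, ‖iteratedFDeriv ℝ i f x‖ ≤ Q * ‖x‖ ^ (d - i) := by
  choose Q hQ using fun i : Fin (N + 1) =>
    exists_norm_iteratedFDeriv_le_of_homogeneous (hf.of_le (by exact_mod_cast i.is_le)) hom
  refine ⟨∑ i, |Q i|, fun i hi x hx => (hQ ⟨i, Nat.lt_succ_of_le hi⟩ x hx).trans ?_⟩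
  gcongr
  exact (le_abs_self _).trans
    (Finset.single_le_sum (fun j _ => abs_nonneg (Q j)) (Finset.mem_univ _))

theorem norm_iteratedFDeriv_mul_le_of_geometric {A : Type*} [NormedRing A] [NormedAlgebra ℝ A]
    {f g : E → A} {s : Set E} (hs : IsOpen s) {x : E} (hx : x ∈ s) {i : ℕ}
    (hf : ContDiffOn ℝ i f s) (hg : ContDiffOn ℝ i g s) {a b c d : ℝ}
    (hfb : ∀ j ≤ i, ‖iteratedFDeriv ℝ j f x‖ ≤ a * c ^ j)
    (hgb : ∀ j ≤ i, ‖iteratedFDeriv ℝ j g x‖ ≤ b * d ^ j) :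
    ‖iteratedFDeriv ℝ i (fun y => f y * g y) x‖ ≤ a * b * (c + d) ^ i := by
  have hterm : ∀ j ∈ Finset.range (i + 1), (i.choose j : ℝ) * ‖iteratedFDerivWithin ℝ j f s x‖ *
      ‖iteratedFDerivWithin ℝ (i - j) g s x‖ ≤ a * b * (c ^ j * d ^ (i - j) * i.choose j) := by
    intro j hj
    have hji : j ≤ i := Nat.lt_succ_iff.mp (Finset.mem_range.mp hj)
    rw [iteratedFDerivWithin_of_isOpen j hs hx, iteratedFDerivWithin_of_isOpen (i - j) hs hx]
    calc (i.choose j : ℝ) * ‖iteratedFDeriv ℝ j f x‖ * ‖iteratedFDeriv ℝ (i - j) g x‖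
        = i.choose j * (‖iteratedFDeriv ℝ j f x‖ * ‖iteratedFDeriv ℝ (i - j) g x‖) := by ring
      _ ≤ i.choose j * (a * c ^ j * (b * d ^ (i - j))) :=
          mul_le_mul_of_nonneg_left (mul_le_mul (hfb j hji) (hgb _ (Nat.sub_le i j))
            (norm_nonneg _) ((norm_nonneg _).trans (hfb j hji))) (Nat.cast_nonneg _)
      _ = a * b * (c ^ j * d ^ (i - j) * i.choose j) := by ring
  rw [← iteratedFDerivWithin_of_isOpen i hs hx, add_pow, Finset.mul_sum]
  exact (norm_iteratedFDerivWithin_mul_le hf hg hs.uniqueDiffOn hx le_rfl).trans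
    (Finset.sum_le_sum hterm)

theorem norm_iteratedFDeriv_le_of_decay {η : E → F} {C p q₁ q₂ : ℝ} {y : E} (hy : 1 ≤ ‖y‖)
    (h0 : ‖η y‖ ≤ C * ‖y‖ ^ (-p)) (h1 : ‖fderiv ℝ η y‖ ≤ C * ‖y‖ ^ (-q₁))
    (h2 : ‖iteratedFDeriv ℝ 2 η y‖ ≤ C * ‖y‖ ^ (-q₂)) (hq₁ : p ≤ q₁) (hq₂ : p ≤ q₂)
    {j : ℕ} (hj : j ≤ 2) : ‖iteratedFDeriv ℝ j η y‖ ≤ max C 0 * ‖y‖ ^ (-p) := by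
  have hweaken : ∀ q : ℝ, p ≤ q → C * ‖y‖ ^ (-q) ≤ max C 0 * ‖y‖ ^ (-p) := fun q hq =>
    mul_le_mul (le_max_left _ _) (Real.rpow_le_rpow_of_exponent_le hy (neg_le_neg hq))
      (Real.rpow_nonneg (norm_nonneg _) _) (le_max_right _ _)
  interval_cases j
  · simpa using h0.trans (hweaken p le_rfl)
  · simpa using h1.trans (hweaken _ hq₁)
  · exact h2.trans (hweaken _ hq₂)

end IteratedFDerivBounds

section RemovableSingularity

variable {E F : Type*} [NormedAddCommGroup E] [NormedSpace ℝ E] [NormedAddCommGroup F]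
  [NormedSpace ℝ F]

theorem hasFDerivAt_zero_of_isBigO_rpow {f : E → F} (hf0 : f 0 = 0) {a : ℝ} (ha : 1 < a)
    (hf : f =O[𝓝[≠] 0] fun x => ‖x‖ ^ a) : HasFDerivAt f (0 : E →L[ℝ] F) 0 := by
  have : f =o[𝓝 0] fun x => x := by
    rw [← nhdsNE_sup_pure, isLittleO_sup, isLittleO_pure]
    exact ⟨hf.trans_isLittleO ((isLittleO_norm_rpow_id ha).mono nhdsWithin_le_nhds), hf0⟩
  simpa [hasFDerivAt_iff_isLittleO_nhds_zero, hf0] using this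

theorem contDiffAt_two_of_continuousAt_fderiv_fderiv {f : E → F} {x₀ : E}
    (hf : ∀ᶠ x in 𝓝[≠] x₀, ContDiffAt ℝ 2 f x) (hD1 : DifferentiableAt ℝ f x₀)
    (hD2 : DifferentiableAt ℝ (fderiv ℝ f) x₀) (hcont : ContinuousAt (fderiv ℝ (fderiv ℝ f)) x₀) :
    ContDiffAt ℝ 2 f x₀ := by
  have hnear : ∀ᶠ x in 𝓝 x₀, ContDiffAt ℝ 2 f x ∨ x = x₀ := by
    filter_upwards [eventually_nhdsWithin_iff.1 hf] with x hx
    exact (em (x = x₀)).elim Or.inr fun h => Or.inl (hx h)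
  refine contDiffAt_succ_iff_hasFDerivAt (n := 1).2 ⟨fderiv ℝ f, ⟨_, hnear, ?_⟩, ?_⟩
  · rintro x (hx | rfl)
    exacts [(hx.differentiableAt (by norm_num)).hasFDerivAt, hD1.hasFDerivAt]
  refine contDiffAt_succ_iff_hasFDerivAt (n := 0).2 ⟨fderiv ℝ (fderiv ℝ f), ⟨_, hnear, ?_⟩, ?_⟩
  · rintro x (hx | rfl)
    exacts [((hx.fderiv_right (m := 1) le_rfl).differentiableAt one_ne_zero).hasFDerivAt,
      hD2.hasFDerivAt]
  -- `ContDiffAt ℝ 0` asks for continuity on a whole neighbourhood of `x₀`, not only at `x₀`.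
  refine contDiffAt_zero.2 ⟨_, hnear, fun x hx => ContinuousAt.continuousWithinAt ?_⟩
  rcases hx with hx | rfl
  exacts [((hx.fderiv_right (m := 1) le_rfl).fderiv_right (m := 0) le_rfl).continuousAt, hcont]

theorem contDiffAt_two_zero_of_isBigO_iteratedFDeriv {f : E → F} (hf0 : f 0 = 0)
    (hf : ∀ᶠ x in 𝓝[≠] (0 : E), ContDiffAt ℝ 2 f x) {a : ℝ} (ha : 0 < a)
    (hO : ∀ i ≤ 2, iteratedFDeriv ℝ i f =O[𝓝[≠] 0] fun x => ‖x‖ ^ (a + 2 - i)) :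
    ContDiffAt ℝ 2 f 0 ∧ fderiv ℝ f 0 = 0 ∧ iteratedFDeriv ℝ 2 f 0 = 0 := by
  have hO' : ∀ i ≤ 2, (fun x => ‖iteratedFDeriv ℝ i f x‖) =O[𝓝[≠] 0]
      fun x => ‖x‖ ^ (a + 2 - i) := fun i hi => isBigO_norm_left.2 (hO i hi)
  have hO0 : f =O[𝓝[≠] 0] fun x => ‖x‖ ^ (a + 2) := by
    simpa using hO' 0 (by norm_num)
  have hO1 : fderiv ℝ f =O[𝓝[≠] 0] fun x => ‖x‖ ^ (a + 1) := by
    have := hO' 1 (by norm_num)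
    rw [show a + 2 - ((1 : ℕ) : ℝ) = a + 1 by push_cast; ring] at this
    simpa only [norm_iteratedFDeriv_one, isBigO_norm_left] using this
  have hO2 : fderiv ℝ (fderiv ℝ f) =O[𝓝[≠] 0] fun x => ‖x‖ ^ a := by
    simpa only [← norm_iteratedFDeriv_fderiv (n := 1), norm_iteratedFDeriv_one, isBigO_norm_left,
      Nat.cast_ofNat, add_sub_cancel_right] using hO' 2 le_rfl
  have hD1 : HasFDerivAt f 0 0 := hasFDerivAt_zero_of_isBigO_rpow hf0 (by linarith) hO0
  have hD2 : HasFDerivAt (fderiv ℝ f) 0 0 :=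
    hasFDerivAt_zero_of_isBigO_rpow hD1.fderiv (by linarith) hO1
  have hcont : ContinuousAt (fderiv ℝ (fderiv ℝ f)) 0 := by
    rw [← continuousWithinAt_compl_self, ContinuousWithinAt, hD2.fderiv]
    exact IsBigO.trans_tendsto (f'' := fderiv ℝ (fderiv ℝ f)) hO2
      ((tendsto_norm_rpow_nhds_zero ha).mono_left nhdsWithin_le_nhds)
  refine ⟨contDiffAt_two_of_continuousAt_fderiv_fderiv hf hD1.differentiableAt
    hD2.differentiableAt hcont, hD1.fderiv, ?_⟩
  ext v
  simp [iteratedFDeriv_two_apply, hD2.fderiv]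

end RemovableSingularity

section Inversion

variable {E : Type*} [NormedAddCommGroup E] [InnerProductSpace ℝ E]

theorem contDiffOn_inv_norm_sq_smul {n : WithTop ℕ∞} :
    ContDiffOn ℝ n (fun x : E => (‖x‖ ^ 2)⁻¹ • x) {0}ᶜ :=
  ((contDiff_norm_sq ℝ).contDiffOn.inv fun x hx => by simpa using hx).smul contDiffOn_id

theorem norm_inv_norm_sq_smul (x : E) : ‖(‖x‖ ^ 2)⁻¹ • x‖ = ‖x‖⁻¹ := by
  rw [norm_smul, norm_inv, norm_pow, norm_norm, sq, ← div_eq_inv_mul, div_self_mul_self']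

theorem inv_norm_sq_smul_smul {c : ℝ} (hc : 0 < c) (x : E) :
    (‖c • x‖ ^ 2)⁻¹ • (c • x) = c ^ (-1 : ℤ) • ((‖x‖ ^ 2)⁻¹ • x) := by
  rw [norm_smul, Real.norm_of_nonneg hc.le, smul_smul, smul_smul, zpow_neg_one]
  congr 1
  field_simp

variable {F : Type*} [NormedAddCommGroup F] [NormedSpace ℝ F] [FiniteDimensional ℝ E]

theorem exists_norm_iteratedFDeriv_comp_inv_norm_sq_smul_le {η : E → F} {N : ℕ}
    (hη : ContDiff ℝ N η) {C p : ℝ}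
    (hdecay : ∀ j ≤ N, ∀ y, 1 ≤ ‖y‖ → ‖iteratedFDeriv ℝ j η y‖ ≤ C * ‖y‖ ^ (-p)) :
    ∃ A, ∀ i ≤ N, ∀ x ≠ 0, ‖x‖ ≤ 1 →
      ‖iteratedFDeriv ℝ i (fun ξ => η ((‖ξ‖ ^ 2)⁻¹ • ξ)) x‖ ≤ A * ‖x‖ ^ p * (‖x‖ ^ 2)⁻¹ ^ i := by
  obtain ⟨Q, hQ⟩ := exists_forall_norm_iteratedFDeriv_le_of_homogeneous (d := -1)
    (contDiffOn_inv_norm_sq_smul (E := E) (n := N)) fun c hc x => inv_norm_sq_smul_smul hc x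
  set B := max Q 1
  refine ⟨N.factorial * B ^ N * C, fun i hi x hx hx1 => ?_⟩
  have hr : 0 < ‖x‖ := norm_pos_iff.2 hx
  have hx0 : x ∈ ({0}ᶜ : Set E) := hx
  have hη_at : ∀ j ≤ N, ‖iteratedFDerivWithin ℝ j η Set.univ ((‖x‖ ^ 2)⁻¹ • x)‖ ≤ C * ‖x‖ ^ p := by
    intro j hj
    have hy : 1 ≤ ‖(‖x‖ ^ 2)⁻¹ • x‖ := by
      rw [norm_inv_norm_sq_smul]; exact one_le_inv₀ hr |>.mpr hx1
    rw [iteratedFDerivWithin_univ]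
    refine (hdecay j hj _ hy).trans_eq ?_
    rw [norm_inv_norm_sq_smul, Real.inv_rpow hr.le, Real.rpow_neg hr.le, inv_inv]
  have hinv_at : ∀ j, 1 ≤ j → j ≤ N →
      ‖iteratedFDerivWithin ℝ j (fun ξ : E => (‖ξ‖ ^ 2)⁻¹ • ξ) {0}ᶜ x‖ ≤ (B * (‖x‖ ^ 2)⁻¹) ^ j := by
    intro j hj1 hjN
    rw [iteratedFDerivWithin_of_isOpen j isOpen_compl_singleton hx0, mul_pow, inv_sq_pow_eq_zpow]
    refine (hQ j hjN x hx).trans (mul_le_mul ?_ ?_ (zpow_nonneg hr.le _) (by positivity))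
    · exact (le_max_left _ _).trans (le_self_pow₀ (le_max_right _ _) (by omega))
    · exact zpow_le_zpow_right_of_le_one₀ hr hx1 (by omega)
  have hcomp := norm_iteratedFDerivWithin_comp_le hη.contDiffOn contDiffOn_inv_norm_sq_smul
    (mod_cast hi) uniqueDiffOn_univ isOpen_compl_singleton.uniqueDiffOn (Set.mapsTo_univ _ _) hx0
    (fun j hj => hη_at j (hj.trans hi)) (fun j hj1 hj => hinv_at j hj1 (hj.trans hi))
  rw [iteratedFDerivWithin_of_isOpen i isOpen_compl_singleton hx0] at hcomp
  refine hcomp.trans ?_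
  have hC : 0 ≤ C := by
    have := (norm_nonneg _).trans (hη_at 0 (Nat.zero_le _))
    exact nonneg_of_mul_nonneg_left this (Real.rpow_pos_of_pos hr p)
  have hB : 1 ≤ B := le_max_right _ _
  calc (i.factorial : ℝ) * (C * ‖x‖ ^ p) * (B * (‖x‖ ^ 2)⁻¹) ^ i
      = (i.factorial * B ^ i) * C * ‖x‖ ^ p * (‖x‖ ^ 2)⁻¹ ^ i := by ring
    _ ≤ (N.factorial * B ^ N) * C * ‖x‖ ^ p * (‖x‖ ^ 2)⁻¹ ^ i := by
      gcongr

theorem exists_norm_iteratedFDeriv_norm_sq_le (N : ℕ) :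
    ∃ Q, ∀ i ≤ N, ∀ x : E, x ≠ 0 → ‖x‖ ≤ 1 →
      ‖iteratedFDeriv ℝ i (fun y : E => ‖y‖ ^ 2) x‖ ≤ Q * ‖x‖ ^ 2 * (‖x‖ ^ 2)⁻¹ ^ i := by
  obtain ⟨Q, hQ⟩ := exists_forall_norm_iteratedFDeriv_le_of_homogeneous (d := 2)
    (contDiff_norm_sq ℝ (E := E) (n := N)).contDiffOn fun c hc x => by
      simp [norm_smul, mul_pow, abs_of_pos hc]
  refine ⟨Q, fun i hi x hx hx1 => (hQ i hi x hx).trans ?_⟩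
  have hr : 0 < ‖x‖ := norm_pos_iff.2 hx
  have hQ0 : 0 ≤ Q := nonneg_of_mul_nonneg_left
    ((norm_nonneg _).trans (hQ 0 (Nat.zero_le _) x hx)) (zpow_pos hr _)
  rw [mul_assoc]
  gcongr Q * ?_
  calc ‖x‖ ^ ((2 : ℤ) - i) ≤ ‖x‖ ^ ((2 : ℤ) + -(2 * i : ℤ)) :=
        zpow_le_zpow_right_of_le_one₀ hr hx1 (by omega)
    _ = ‖x‖ ^ 2 * (‖x‖ ^ 2)⁻¹ ^ i := by rw [zpow_add₀ hr.ne', inv_sq_pow_eq_zpow]; norm_cast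

theorem isBigO_iteratedFDeriv_inverted_sq {η : E → ℝ} {N : ℕ} (hη : ContDiff ℝ N η)
    {C p : ℝ} (hdecay : ∀ j ≤ N, ∀ y, 1 ≤ ‖y‖ → ‖iteratedFDeriv ℝ j η y‖ ≤ C * ‖y‖ ^ (-p))
    {i : ℕ} (hi : i ≤ N) :
    iteratedFDeriv ℝ i (fun ξ => ‖ξ‖ ^ 2 * η ((‖ξ‖ ^ 2)⁻¹ • ξ) ^ 2) =O[𝓝[≠] 0]
      fun x => ‖x‖ ^ (2 * p + 2 - 2 * i) := by
  obtain ⟨A, hA⟩ := exists_norm_iteratedFDeriv_comp_inv_norm_sq_smul_le hη hdecay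
  obtain ⟨Q, hQ⟩ := exists_norm_iteratedFDeriv_norm_sq_le (E := E) N
  set G := fun ξ : E => η ((‖ξ‖ ^ 2)⁻¹ • ξ)
  have hGsmooth : ContDiffOn ℝ N G {0}ᶜ := hη.comp_contDiffOn contDiffOn_inv_norm_sq_smul
  have hsplit : (fun ξ => ‖ξ‖ ^ 2 * η ((‖ξ‖ ^ 2)⁻¹ • ξ) ^ 2) = fun y => ‖y‖ ^ 2 * (G y * G y) := by
    funext y; ring
  rw [hsplit]
  refine IsBigO.of_bound (Q * A ^ 2 * 3 ^ i) ?_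
  filter_upwards [nhdsWithin_le_nhds (Metric.closedBall_mem_nhds (0 : E) one_pos),
    self_mem_nhdsWithin] with x hx1 hx
  rw [mem_closedBall_zero_iff] at hx1
  have hr : 0 < ‖x‖ := norm_pos_iff.2 hx
  have hGG : ∀ j ≤ N, ‖iteratedFDeriv ℝ j (fun y => G y * G y) x‖ ≤
      A * ‖x‖ ^ p * (A * ‖x‖ ^ p) * ((‖x‖ ^ 2)⁻¹ + (‖x‖ ^ 2)⁻¹) ^ j := fun j hj =>
    norm_iteratedFDeriv_mul_le_of_geometric isOpen_compl_singleton hx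
      (hGsmooth.of_le (mod_cast hj)) (hGsmooth.of_le (mod_cast hj))
      (fun k hk => hA k (hk.trans hj) x hx hx1) (fun k hk => hA k (hk.trans hj) x hx hx1)
  refine (norm_iteratedFDeriv_mul_le_of_geometric isOpen_compl_singleton hx
    (contDiff_norm_sq ℝ).contDiffOn ((hGsmooth.mul hGsmooth).of_le (mod_cast hi))
    (fun k hk => hQ k (hk.trans hi) x hx hx1) (fun k hk => hGG k (hk.trans hi))).trans_eq ?_
  have hpow : ‖x‖ ^ (2 * p + 2 - 2 * i) = ‖x‖ ^ p * ‖x‖ ^ p * ‖x‖ ^ 2 * (‖x‖ ^ 2)⁻¹ ^ i := by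
    rw [inv_sq_pow_eq_zpow, ← Real.rpow_intCast, ← Real.rpow_natCast _ 2, ← Real.rpow_add hr,
      ← Real.rpow_add hr, ← Real.rpow_add hr]
    push_cast
    ring_nf
  rw [Real.norm_of_nonneg (Real.rpow_nonneg hr.le _), hpow]
  ring

end Inversion

/-- The function `|ξ|² η(ξ/|ξ|²)²` extends to a `C²` function near `ξ = 0` which vanishes
at `0` together with its first and second derivatives. -/
theorem inverted_eta_sq_extends {n : ℕ} (hn : n = 2 ∨ n = 3) (ε : ℝ)
    (hε : ε ∈ Set.Ioo (0 : ℝ) 1) (η : Euc (n - 1) → ℝ) (hη : ContDiff ℝ 2 η) (C : ℝ)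
    (hdecay : ∀ x, 1 ≤ ‖x‖ →
      |η x| ≤ C * ‖x‖ ^ (-((n : ℝ) - 1 + ε)) ∧
      ‖fderiv ℝ η x‖ ≤ C * ‖x‖ ^ (-((n : ℝ) + ε)) ∧
      ‖iteratedFDeriv ℝ 2 η x‖ ≤ C * ‖x‖ ^ (-((n : ℝ) + 1 + ε))) :
    ∃ δ > (0 : ℝ), ∃ h : Euc (n - 1) → ℝ,
      ContDiffOn ℝ 2 h (Metric.ball 0 δ) ∧
      (∀ ξ ∈ Metric.ball (0 : Euc (n - 1)) δ, ξ ≠ 0 →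
        h ξ = ‖ξ‖ ^ 2 * (η ((‖ξ‖ ^ 2)⁻¹ • ξ)) ^ 2) ∧
      h 0 = 0 ∧ fderiv ℝ h 0 = 0 ∧ iteratedFDeriv ℝ 2 h 0 = 0 := by
  obtain ⟨hε0, -⟩ := hε
  have hn2 : (2 : ℝ) ≤ n := by rcases hn with rfl | rfl <;> norm_num
  set p := (n : ℝ) - 1 + ε
  have hdecay' : ∀ j ≤ 2, ∀ y : Euc (n - 1), 1 ≤ ‖y‖ →
      ‖iteratedFDeriv ℝ j η y‖ ≤ max C 0 * ‖y‖ ^ (-p) := fun j hj y hy =>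
    let ⟨h0, h1, h2⟩ := hdecay y hy
    norm_iteratedFDeriv_le_of_decay hy h0 h1 h2 (by linarith) (by linarith) hj
  set h := fun ξ : Euc (n - 1) => ‖ξ‖ ^ 2 * η ((‖ξ‖ ^ 2)⁻¹ • ξ) ^ 2
  have hsmooth : ∀ x ≠ 0, ContDiffAt ℝ 2 h x := fun x hx =>
    ((contDiff_norm_sq ℝ).contDiffOn.mul ((hη.comp_contDiffOn contDiffOn_inv_norm_sq_smul).pow 2)
      ).contDiffAt (isOpen_compl_singleton.mem_nhds hx)
  have hO : ∀ i ≤ 2, iteratedFDeriv ℝ i h =O[𝓝[≠] 0] fun x => ‖x‖ ^ (2 * p - 2 + 2 - i) :=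
    fun i hi => (isBigO_iteratedFDeriv_inverted_sq hη hdecay' hi).trans
      (isBigO_norm_rpow_nhdsNE_of_le (by have : (i : ℝ) ≤ 2 := mod_cast hi; linarith))
  obtain ⟨h0, hD1, hD2⟩ := contDiffAt_two_zero_of_isBigO_iteratedFDeriv (by simp [h])
    (eventually_nhdsWithin_of_forall hsmooth) (by linarith) hO
  refine ⟨1, one_pos, h, fun x _ => ?_, fun _ _ _ => rfl, by simp [h], hD1, hD2⟩
  rcases eq_or_ne x 0 with rfl | hx
  exacts [h0.contDiffWithinAt, (hsmooth x hx).contDiffWithinAt]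
end
end
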